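/- arXiv:1804.05434 — 4 statements merged into one kernel-verified Lean document; each statement's English description precedes it below -/
import Mathlib

section
/- Let r be a real number with 0 < r < 7/15. Then there exists a unique real number R > 0 satisfying the compatibility equation R = r*R + ((2/3)*r*R + 1)*(4*r*R + 5) / ((7/3)*r*R + 3), and this unique positive solution is given explicitly by R = 30 / (9 - 31*r + Real.sqrt (81 + r*(61*r - 138))). -/
/-!
Clearing the denominator turns the compatibility equation into the quadratic
`a R² + b R - c = 0` with `a = r (7 - 15 r)`, `b = 9 - 31 r`, `c = 15`. For `0 < r < 7/15`
we have `a > 0`, so the product `-c / a` of the roots is negative and exactly one root is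
positive, namely `(-b + √Δ) / 2a = 2c / (b + √Δ)`, which is the stated formula since
`Δ = b² + 4ac = 81 + r (61 r - 138)`.
-/

open Real

lemma compat_iff_quadratic {r R : ℝ} (hD : (7/3)*r*R + 3 ≠ 0) :
    R = r*R + ((2/3)*r*R + 1)*(4*r*R + 5) / ((7/3)*r*R + 3) ↔
      r*(7 - 15*r)*R^2 + (9 - 31*r)*R - 15 = 0 := by
  rw [← sub_eq_iff_eq_add', eq_div_iff hD]
  constructor
  · intro h; linear_combination 3 * h
  · intro h; linear_combination h / 3

lemma add_sqrt_sq_add_pos (b : ℝ) {d : ℝ} (hd : 0 < d) : 0 < b + √(b^2 + d) := by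
  have hb : |b| < √(b^2 + d) := by
    rw [← sqrt_sq_eq_abs]
    exact sqrt_lt_sqrt (sq_nonneg b) (by linarith)
  linarith [neg_abs_le b]

lemma quadratic_eq_zero_iff_of_pos {a b c x : ℝ} (ha : 0 < a) (hc : 0 < c) (hx : 0 < x) :
    a*x^2 + b*x - c = 0 ↔ x = 2*c / (b + √(b^2 + 4*a*c)) := by
  set s := √(b^2 + 4*a*c)
  have hbs : 0 < b + s := add_sqrt_sq_add_pos b (by positivity)
  have hss : s * s = b^2 + 4*a*c := mul_self_sqrt (by positivity)
  have hdisc : discrim a b (-c) = s * s := by rw [hss, discrim]; ring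
  have hroot : (-b + s) / (2*a) = 2*c / (b + s) := by
    rw [div_eq_div_iff (by positivity) hbs.ne']
    linear_combination hss
  have hneg : (-b - s) / (2*a) < 0 := div_neg_of_neg_of_pos (by linarith) (by positivity)
  have hroots := quadratic_eq_zero_iff ha.ne' hdisc x
  rw [← hroot]
  constructor
  · intro h
    obtain h | h := hroots.1 (by linear_combination h)
    · exact h
    · linarith
  · intro h
    linear_combination hroots.2 (Or.inl h)

/-- Theorem 2.5(i) (scalar content): for `0 < r < 7/15` there is a unique positive `R`
satisfying the compatibility equation, and it is given by the explicit formula. -/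
theorem stmt0 (r : ℝ) (hr : 0 < r) (hr' : r < 7/15) :
    (∃! R : ℝ, 0 < R ∧
      R = r*R + ((2/3)*r*R + 1)*(4*r*R + 5) / ((7/3)*r*R + 3)) ∧
    (∀ R : ℝ, 0 < R →
      R = r*R + ((2/3)*r*R + 1)*(4*r*R + 5) / ((7/3)*r*R + 3) →
      R = 30 / (9 - 31*r + Real.sqrt (81 + r*(61*r - 138)))) := by
  have ha : 0 < r*(7 - 15*r) := mul_pos hr (by linarith)
  have hformula : 2*15 / (9 - 31*r + √((9 - 31*r)^2 + 4*(r*(7 - 15*r))*15))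
      = 30 / (9 - 31*r + √(81 + r*(61*r - 138))) := by ring_nf
  have hsol : ∀ R, 0 < R → (R = r*R + ((2/3)*r*R + 1)*(4*r*R + 5) / ((7/3)*r*R + 3) ↔
      R = 30 / (9 - 31*r + √(81 + r*(61*r - 138)))) := fun R hR => by
    rw [compat_iff_quadratic (by positivity), quadratic_eq_zero_iff_of_pos ha (by norm_num) hR,
      hformula]
  have hpos : 0 < 30 / (9 - 31*r + √(81 + r*(61*r - 138))) := by
    rw [← hformula]
    exact div_pos (by norm_num) (add_sqrt_sq_add_pos _ (by positivity))
  exact ⟨⟨_, ⟨hpos, (hsol _ hpos).2 rfl⟩, fun R ⟨hR, h⟩ => (hsol R hR).1 h⟩,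
    fun R hR h => (hsol R hR).1 h⟩
end

section
/- Let r be a real number with r ≥ 7/15. Then there is no real number R > 0 satisfying R = r*R + ((2/3)*r*R + 1)*(4*r*R + 5) / ((7/3)*r*R + 3). -/
/-- The 'only if' half of Theorem 2.5(i): for `r ≥ 7/15` the compatibility equation
has no positive solution `R`. -/
theorem stmt1 (r : ℝ) (hr : r ≥ 7/15) :
    ¬ ∃ R : ℝ, 0 < R ∧
      R = r*R + ((2/3)*r*R + 1)*(4*r*R + 5) / ((7/3)*r*R + 3) := by
  rintro ⟨R, hR, heq⟩
  have hrpos : 0 < r := lt_of_lt_of_le (by norm_num) hr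
  have hd : (0:ℝ) < (7/3)*r*R + 3 := by positivity
  have hd' : ((7/3)*r*R + 3 : ℝ) ≠ 0 := ne_of_gt hd
  field_simp at heq
  nlinarith [mul_pos hrpos hR, mul_pos (mul_pos hrpos hR) hR,
    mul_nonneg (mul_nonneg hrpos.le (mul_pos hR hR).le) (sub_nonneg.mpr (by linarith : (7:ℝ)/15*15 ≤ r*15))]
end

section
/- Define f : ℝ → ℝ by f(r) = 30 / (9 - 31*r + Real.sqrt (81 + r*(61*r - 138))). Then f(r) > 0 for every r with 0 < r < 7/15, and f(r) tends to +∞ as r tends to 7/15 from the left (i.e. Tendsto f (nhdsWithin (7/15) (Set.Iio (7/15))) atTop). -/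
/-!
The denominator `d r = 9 - 31 r + √(81 + r (61 r - 138))` is positive on `(0, 7/15)`, because
the radicand equals `(31 r - 9)² + 60 r (7 - 15 r)`, so its square root exceeds `31 r - 9` there.
At `r = 7/15` the radicand is `(82/15)² = (31 r - 9)²`, so `d` vanishes; by continuity `d r → 0⁺`
as `r → 7/15⁻`, and `30 / d r → +∞`.
-/

open Filter Topology

noncomputable def resistanceDenom (r : ℝ) : ℝ :=
  9 - 31 * r + √(81 + r * (61 * r - 138))

lemma radicand_eq (r : ℝ) :
    81 + r * (61 * r - 138) = (31 * r - 9) ^ 2 + 60 * r * (7 - 15 * r) := by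
  ring

lemma resistanceDenom_pos {r : ℝ} (h0 : 0 < r) (h1 : r < 7 / 15) : 0 < resistanceDenom r := by
  have hsqrt : 31 * r - 9 < √(81 + r * (61 * r - 138)) := by
    apply Real.lt_sqrt_of_sq_lt
    rw [radicand_eq]
    nlinarith
  unfold resistanceDenom
  linarith

lemma resistanceDenom_seven_fifteenths : resistanceDenom (7 / 15) = 0 := by
  have hrad : (81 + 7 / 15 * (61 * (7 / 15) - 138) : ℝ) = (82 / 15) ^ 2 := by norm_num
  rw [resistanceDenom, hrad, Real.sqrt_sq (by norm_num)]
  norm_num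

lemma continuous_resistanceDenom : Continuous resistanceDenom := by
  unfold resistanceDenom
  fun_prop

lemma tendsto_resistanceDenom_nhdsGT_zero :
    Tendsto resistanceDenom (𝓝[<] (7 / 15)) (𝓝[>] 0) := by
  refine tendsto_nhdsWithin_iff.2 ⟨?_, ?_⟩
  · rw [← resistanceDenom_seven_fifteenths]
    exact continuous_resistanceDenom.continuousAt.tendsto.mono_left nhdsWithin_le_nhds
  · filter_upwards [Ioo_mem_nhdsLT (by norm_num : (0 : ℝ) < 7 / 15)] with r hr
    exact resistanceDenom_pos hr.1 hr.2

/-- Remark 2.6: the triangle resistance `R = f r` is positive for `0 < r < 7/15`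
and diverges to `+∞` as `r → (7/15)⁻`. -/
theorem stmt3 :
    (∀ r : ℝ, 0 < r → r < 7/15 →
      0 < 30 / (9 - 31*r + Real.sqrt (81 + r*(61*r - 138)))) ∧
    Tendsto (fun r : ℝ => 30 / (9 - 31*r + Real.sqrt (81 + r*(61*r - 138))))
      (nhdsWithin (7/15) (Set.Iio (7/15))) atTop := by
  refine ⟨fun r h0 h1 => div_pos (by norm_num) (resistanceDenom_pos h0 h1), ?_⟩
  have h := tendsto_resistanceDenom_nhdsGT_zero.inv_tendsto_nhdsGT_zero.const_mul_atTop
    (by norm_num : (0 : ℝ) < 30)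
  exact h.congr fun r => (div_eq_mul_inv 30 (resistanceDenom r)).symm
end

section
/- Let V be a finite set with at least two elements, and let E be the quadratic form on ℝ^V associated to a symmetric bilinear form. Then the following are equivalent: (a) E(u) ≥ 0 for all u, E(u) = 0 if and only if u is constant, and E satisfies the Markov property E(min(max(u,0),1)) ≤ E(u) for all u : V → ℝ; (b) there exists a symmetric function c : V × V → [0,∞) such that for any distinct x, y ∈ V there exist m ≥ 0 and points x = x_0, x_1, ..., x_m = y in V with c(x_i, x_{i+1}) > 0 for all i < m, and E(u) = (1/2) * ∑_{x,y ∈ V} c(x,y)*(u(x) - u(y))^2 for all u : V → ℝ. -/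
/-!
If `B` is nonnegative and vanishes on the constants, Cauchy–Schwarz puts the constants in the
kernel of `B`, so the matrix `B (1_x) (1_y)` has zero row sums and `B u u` is the graph energy
of the conductances `c x y = -B (1_x) (1_y)` (`x ≠ y`). The Markov property applied to
`1_x - ε 1_y`, which is clamped to `1_x`, gives `2 B (1_x) (1_y) ≤ ε B (1_y) (1_y)` for every
`ε > 0`, so these conductances are nonnegative.

For nonnegative symmetric conductances the energy vanishes exactly on the functions that are
constant along positive edges; hence its kernel is the constants iff the positive edges connect
`V` (test on the indicator of a connected component). Clamping is `1`-Lipschitz, which gives the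
Markov property of a graph energy.
-/

open Finset Relation

lemma sq_sub_clamp_le (a b : ℝ) :
    (min (max a 0) 1 - min (max b 0) 1) ^ 2 ≤ (a - b) ^ 2 :=
  sq_le_sq.mpr <| (abs_min_sub_min_le_max _ _ _ _).trans <| by
    simpa using abs_max_sub_max_le_abs a b 0

section Chains

variable {α : Type*} {r : α → α → Prop}

theorem exists_chain_iff_reflTransGen {x y : α} :
    (∃ m : ℕ, ∃ p : ℕ → α, p 0 = x ∧ p m = y ∧ ∀ i < m, r (p i) (p (i + 1))) ↔
      ReflTransGen r x y := by
  constructor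
  · rintro ⟨m, p, rfl, rfl, hp⟩
    induction m with
    | zero => exact .refl
    | succ m ih => exact (ih fun i hi => hp i (by omega)).tail (hp m m.lt_succ_self)
  · intro h
    induction h with
    | refl => exact ⟨0, fun _ => x, rfl, rfl, by simp⟩
    | @tail b c _ hbc ih =>
      obtain ⟨m, p, hp0, hpm, hp⟩ := ih
      refine ⟨m + 1, Function.update p (m + 1) c, by simp [hp0], by simp, fun i hi => ?_⟩
      rcases (Nat.lt_succ_iff.mp hi).lt_or_eq with hi | rfl
      · simpa [Function.update_of_ne (by omega : i ≠ m + 1),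
          Function.update_of_ne (by omega : i + 1 ≠ m + 1)] using hp i hi
      · simpa [hpm] using hbc

theorem forall_ne_exists_chain_iff_forall_reflTransGen :
    (∀ x y : α, x ≠ y → ∃ m : ℕ, ∃ p : ℕ → α, p 0 = x ∧ p m = y ∧
      ∀ i < m, r (p i) (p (i + 1))) ↔ ∀ x y, ReflTransGen r x y :=
  ⟨fun h x y => (eq_or_ne x y).elim (fun hxy => hxy ▸ .refl)
    fun hxy => exists_chain_iff_reflTransGen.1 (h x y hxy),
    fun h x y _ => exists_chain_iff_reflTransGen.2 (h x y)⟩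

theorem forall_reflTransGen_iff_of_symmetric (β : Type*) [Nontrivial β]
    (hr : ∀ x y, r x y → r y x) :
    (∀ x y, ReflTransGen r x y) ↔
      ∀ u : α → β, (∀ x y, r x y → u x = u y) → ∃ a, ∀ x, u x = a := by
  constructor
  · intro h u hu
    rcases isEmpty_or_nonempty α with hα | ⟨⟨x₀⟩⟩
    · exact ⟨Classical.arbitrary β, isEmptyElim⟩
    refine ⟨u x₀, fun x => ?_⟩
    induction h x₀ x with
    | refl => rfl
    | tail _ hbc ih => exact (hu _ _ hbc).symm.trans ih
  · intro h x y
    classical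
    obtain ⟨b₁, b₀, hb⟩ := exists_pair_ne β
    let u : α → β := fun z => if ReflTransGen r x z then b₁ else b₀
    have hu : ∀ a b, r a b → u a = u b := fun a b hab =>
      if_congr ⟨(·.tail hab), (·.tail (hr a b hab))⟩ rfl rfl
    obtain ⟨a, ha⟩ := h u hu
    by_contra hy
    have huxy : u x = u y := (ha x).trans (ha y).symm
    simp only [u, ReflTransGen.refl, if_true, hy, if_false] at huxy
    exact hb huxy

end Chains

section GraphEnergy

variable {V : Type*} [Fintype V]

noncomputable def graphEnergy (c : V → V → ℝ) (u : V → ℝ) : ℝ :=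
  (1 / 2) * ∑ x, ∑ y, c x y * (u x - u y) ^ 2

variable {c : V → V → ℝ}

theorem graphEnergy_nonneg (hc : ∀ x y, 0 ≤ c x y) (u : V → ℝ) : 0 ≤ graphEnergy c u :=
  mul_nonneg (by norm_num) <| sum_nonneg fun x _ => sum_nonneg fun y _ =>
    mul_nonneg (hc x y) (sq_nonneg _)

theorem graphEnergy_clamp_le (hc : ∀ x y, 0 ≤ c x y) (u : V → ℝ) :
    graphEnergy c (fun x => min (max (u x) 0) 1) ≤ graphEnergy c u :=
  mul_le_mul_of_nonneg_left (sum_le_sum fun x _ => sum_le_sum fun y _ =>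
    mul_le_mul_of_nonneg_left (sq_sub_clamp_le (u x) (u y)) (hc x y)) (by norm_num)

theorem graphEnergy_eq_zero_iff (hc : ∀ x y, 0 ≤ c x y) (u : V → ℝ) :
    graphEnergy c u = 0 ↔ ∀ x y, 0 < c x y → u x = u y := by
  have hterm : ∀ x y, 0 ≤ c x y * (u x - u y) ^ 2 :=
    fun x y => mul_nonneg (hc x y) (sq_nonneg _)
  simp only [graphEnergy, mul_eq_zero, one_div, inv_eq_zero, OfNat.ofNat_ne_zero, false_or,
    sum_eq_zero_iff_of_nonneg (fun x _ => sum_nonneg fun y _ => hterm x y),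
    sum_eq_zero_iff_of_nonneg (fun y _ => hterm _ y), mem_univ, true_implies, pow_eq_zero_iff,
    ne_eq, not_false_eq_true, sub_eq_zero]
  exact forall₂_congr fun x y => ⟨fun h hpos => h.resolve_left hpos.ne', fun h =>
    (hc x y).eq_or_lt.imp Eq.symm h⟩

theorem forall_reflTransGen_iff_graphEnergy_eq_zero_iff (hsymm : ∀ x y, c x y = c y x)
    (hc : ∀ x y, 0 ≤ c x y) :
    (∀ x y, ReflTransGen (fun a b => 0 < c a b) x y) ↔
      ∀ u, graphEnergy c u = 0 ↔ ∃ a, ∀ x, u x = a := by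
  rw [forall_reflTransGen_iff_of_symmetric (r := fun a b => 0 < c a b) ℝ
    fun x y h => by rwa [hsymm]]
  refine forall_congr' fun u => ⟨fun h => ⟨fun h0 => h ((graphEnergy_eq_zero_iff hc u).1 h0),
    fun ⟨a, ha⟩ => (graphEnergy_eq_zero_iff hc u).2 fun x y _ => (ha x).trans (ha y).symm⟩,
    fun h hu => h.1 ((graphEnergy_eq_zero_iff hc u).2 hu)⟩

end GraphEnergy

namespace LinearMap.BilinForm

variable {V : Type*} [DecidableEq V] (B : LinearMap.BilinForm ℝ (V → ℝ))

noncomputable def conductance (x y : V) : ℝ :=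
  if x = y then 0 else -B (Pi.single x 1) (Pi.single y 1)

variable {B}

theorem conductance_symm (hB : B.IsSymm) (x y : V) : B.conductance x y = B.conductance y x := by
  by_cases h : x = y
  · rw [h]
  · rw [conductance, conductance, if_neg h, if_neg (Ne.symm h), ← hB.eq]

theorem apply_single_single_nonpos (hB : B.IsSymm) (hnonneg : ∀ u, 0 ≤ B u u)
    (hmarkov : ∀ u : V → ℝ,
      B (fun x => min (max (u x) 0) 1) (fun x => min (max (u x) 0) 1) ≤ B u u)
    {x y : V} (hxy : x ≠ y) : B (Pi.single x 1) (Pi.single y 1) ≤ 0 := by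
  set β := B (Pi.single x 1) (Pi.single y 1)
  set d := B (Pi.single y 1) (Pi.single y 1)
  have key : ∀ ε : ℝ, 0 < ε → 2 * β ≤ ε * d := by
    intro ε hε
    have hclamp : (fun z => min (max ((Pi.single x 1 - ε • Pi.single y 1 : V → ℝ) z) 0) 1) =
        Pi.single x 1 := by
      funext z
      by_cases hzx : z = x
      · subst hzx; simp [hxy]
      · by_cases hzy : z = y
        · subst hzy; simp [hzx, hε.le]
        · simp [hzx, hzy]
    have h := hmarkov (Pi.single x 1 - ε • Pi.single y 1)
    rw [hclamp] at h
    have hyx : B (Pi.single y 1) (Pi.single x 1) = β := hB.eq _ _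
    simp only [map_sub, map_smul, LinearMap.sub_apply, LinearMap.smul_apply, smul_eq_mul,
      hyx] at h
    nlinarith
  by_contra! hβ
  have hd : 0 ≤ d := hnonneg _
  have hε : 0 < β / (d + 1) := by positivity
  have hlt : β / (d + 1) * d < β := by
    rw [div_mul_eq_mul_div, div_lt_iff₀ (by positivity)]
    linarith
  linarith [key _ hε]

theorem conductance_nonneg (hB : B.IsSymm) (hnonneg : ∀ u, 0 ≤ B u u)
    (hmarkov : ∀ u : V → ℝ,
      B (fun x => min (max (u x) 0) 1) (fun x => min (max (u x) 0) 1) ≤ B u u)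
    (x y : V) : 0 ≤ B.conductance x y := by
  unfold conductance
  split_ifs with h
  · exact le_rfl
  · exact neg_nonneg.mpr (apply_single_single_nonpos hB hnonneg hmarkov h)

variable [Fintype V]

theorem apply_eq_sum_apply_single (B : LinearMap.BilinForm ℝ (V → ℝ)) (u v : V → ℝ) :
    B u v = ∑ x, ∑ y, u x * v y * B (Pi.single x 1) (Pi.single y 1) := by
  conv_lhs => rw [← Matrix.toLinearMap₂'_toMatrix' (R := ℝ) B, Matrix.toLinearMap₂'_apply]
  simp only [LinearMap.toMatrix₂'_apply, smul_eq_mul, mul_assoc]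

theorem apply_self_eq_graphEnergy_conductance (hB : B.IsSymm) (hker : B (fun _ => 1) = 0)
    (u : V → ℝ) : B u u = graphEnergy B.conductance u := by
  set b : V → V → ℝ := fun x y => B (Pi.single x 1) (Pi.single y 1)
  have hsum_single : ∑ x : V, Pi.single x (1 : ℝ) = fun _ => 1 :=
    Finset.univ_sum_single fun _ => 1
  have hrow : ∀ x, ∑ y, b x y = 0 := fun x => by
    rw [← map_sum, hsum_single, ← hB.eq, hker]; rfl
  have hcol : ∀ y, ∑ x, b x y = 0 := fun y => by
    rw [← LinearMap.sum_apply, ← map_sum, hsum_single, hker]; rfl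
  have hterm : ∀ x y, B.conductance x y * (u x - u y) ^ 2 =
      2 * (u x * u y * b x y) - u x ^ 2 * b x y - u y ^ 2 * b x y := fun x y => by
    by_cases h : x = y
    · subst h; simp only [conductance, if_true]; ring
    · simp only [conductance, if_neg h, b]; ring
  calc B u u = (1 / 2) * (2 * ∑ x, ∑ y, u x * u y * b x y
        - ∑ x, u x ^ 2 * ∑ y, b x y - ∑ y, u y ^ 2 * ∑ x, b x y) := by
        simp only [hrow, hcol, mul_zero, sum_const_zero, sub_zero]
        rw [apply_eq_sum_apply_single B u u]
        ring
    _ = graphEnergy B.conductance u := by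
        simp only [graphEnergy, hterm, sum_sub_distrib, mul_sum]
        rw [sum_comm (f := fun x y => u y ^ 2 * b x y)]

end LinearMap.BilinForm

theorem stmt7_general {V : Type*} [Fintype V]
    (B : LinearMap.BilinForm ℝ (V → ℝ)) (hsymm : ∀ u v : V → ℝ, B u v = B v u) :
    ((∀ u : V → ℝ, 0 ≤ B u u) ∧
     (∀ u : V → ℝ, B u u = 0 ↔ ∃ a : ℝ, ∀ x, u x = a) ∧
     (∀ u : V → ℝ,
        B (fun x => min (max (u x) 0) 1) (fun x => min (max (u x) 0) 1) ≤ B u u))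
    ↔
    (∃ c : V → V → ℝ, (∀ x y, c x y = c y x) ∧ (∀ x y, 0 ≤ c x y) ∧
      (∀ x y : V, x ≠ y → ∃ m : ℕ, ∃ p : ℕ → V, p 0 = x ∧ p m = y ∧
        ∀ i < m, 0 < c (p i) (p (i+1))) ∧
      (∀ u : V → ℝ, B u u = (1/2) * ∑ x : V, ∑ y : V, c x y * (u x - u y)^2)) := by
  classical
  have hB : B.IsSymm := ⟨hsymm⟩
  constructor
  · rintro ⟨hnonneg, hker, hmarkov⟩
    have hker1 : B (fun _ => 1) = 0 :=
      (B.apply_apply_same_eq_zero_iff hnonneg (LinearMap.BilinForm.isSymm_iff.1 hB)).1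
        ((hker _).2 ⟨1, fun _ => rfl⟩)
    have henergy := B.apply_self_eq_graphEnergy_conductance hB hker1
    have hc := B.conductance_nonneg hB hnonneg hmarkov
    refine ⟨B.conductance, B.conductance_symm hB, hc, ?_, henergy⟩
    refine forall_ne_exists_chain_iff_forall_reflTransGen.2 <|
      (forall_reflTransGen_iff_graphEnergy_eq_zero_iff (B.conductance_symm hB) hc).2 ?_
    simpa only [henergy] using hker
  · rintro ⟨c, hc_symm, hc, hconn, hE⟩
    have hreach :=
      forall_ne_exists_chain_iff_forall_reflTransGen (r := fun a b => 0 < c a b) |>.1 hconn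
    simp only [hE]
    exact ⟨graphEnergy_nonneg hc,
      (forall_reflTransGen_iff_graphEnergy_eq_zero_iff hc_symm hc).1 hreach,
      graphEnergy_clamp_le hc⟩

/-- Kigami's characterization of resistance forms on a finite set (Lemma 4.4 of
the paper): a quadratic form `u ↦ B u u` of a symmetric bilinear form `B` on
`ℝ^V` is nonnegative with kernel the constants and Markovian if and only if it
is the energy of a weighted graph on `V` whose positive-conductance edges
connect the whole of `V`. -/
theorem stmt7 {V : Type*} [Fintype V] (hV : 1 < Fintype.card V)
    (B : LinearMap.BilinForm ℝ (V → ℝ)) (hsymm : ∀ u v : V → ℝ, B u v = B v u) :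
    ((∀ u : V → ℝ, 0 ≤ B u u) ∧
     (∀ u : V → ℝ, B u u = 0 ↔ ∃ a : ℝ, ∀ x, u x = a) ∧
     (∀ u : V → ℝ,
        B (fun x => min (max (u x) 0) 1) (fun x => min (max (u x) 0) 1) ≤ B u u))
    ↔
    (∃ c : V → V → ℝ, (∀ x y, c x y = c y x) ∧ (∀ x y, 0 ≤ c x y) ∧
      (∀ x y : V, x ≠ y → ∃ m : ℕ, ∃ p : ℕ → V, p 0 = x ∧ p m = y ∧
        ∀ i < m, 0 < c (p i) (p (i+1))) ∧
      (∀ u : V → ℝ, B u u = (1/2) * ∑ x : V, ∑ y : V, c x y * (u x - u y)^2)) :=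
  stmt7_general B hsymm
end
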